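/- Let G(x,y,t) = (y²−2xt)/2 (a parabola in ℙ²), S₀ = (1−v², 2v, 0) with v ∈ ℂ, v ≠ 0, and let Φ_{S₀,G} = −(2H_G N_{S₀}/(d−1)²)·Id + Δ_{S₀}G·σ₀ be the planar caustic map, where σ₀ = (G_x²+G_y²)·S₀ − 2Δ_{S₀}G·(G_x,G_y,0), N_{S₀} = (x₀t−xt₀)² + (y₀t−yt₀)², d = 2. Then under the parametrization ψ(a,b) = (a²/2, ab, b²) of the parabola, Φ_{S₀,G}(ψ(a,b)) = (X₁, Y₁, Z₁) with X₁ = 2v(1−v²)a³b³ + 12v²a²b⁴ − 6v(1−v²)ab⁵ + (1−v²)²b⁶, Y₁ = −4v²a³b³ + 6v(1−v²)a²b⁴ + 12v²ab⁵ − 2v(1−v²)b⁶, Z₁ = 2(1+v²)²b⁶, as polynomial identities in a, b. -/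
import Mathlib


noncomputable section
open Complex

/-- `Δ_{S₀}G = x₀G_x + y₀G_y + t₀G_t` for `G = (y²−2xt)/2` (so `G_x = −t`, `G_y = y`,
`G_t = −x`) and `S₀ = (1−v², 2v, 0)`. -/
def delta14 (v x y t : ℂ) : ℂ := (1 - v ^ 2) * (-t) + 2 * v * y + 0 * (-x)

/-- `σ₀ = (G_x²+G_y²)·S₀ − 2Δ_{S₀}G·(G_x,G_y,0)`. -/
def sigma14 (v x y t : ℂ) : Fin 3 → ℂ :=
  fun i => ((-t) ^ 2 + y ^ 2) * (![1 - v ^ 2, 2 * v, 0] : Fin 3 → ℂ) i -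
    2 * delta14 v x y t * (![-t, y, 0] : Fin 3 → ℂ) i

/-- The Hessian determinant of `G = (y²−2xt)/2`. -/
def HG14 : ℂ := Matrix.det !![(0 : ℂ), 0, -1; 0, 1, 0; -1, 0, 0]

/-- `N_{S₀} = (x₀t − xt₀)² + (y₀t − yt₀)²` with `S₀ = (1−v², 2v, 0)`. -/
def NS14 (v x y t : ℂ) : ℂ := ((1 - v ^ 2) * t - x * 0) ^ 2 + (2 * v * t - y * 0) ^ 2

/-- The planar caustic map `Φ_{S₀,G} = −(2H_G N_{S₀}/(d−1)²)·Id + Δ_{S₀}G·σ₀`, `d = 2`. -/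
def Phi14 (v x y t : ℂ) : Fin 3 → ℂ :=
  fun i => -(2 * HG14 * NS14 v x y t / ((2 : ℂ) - 1) ^ 2) * (![x, y, t] : Fin 3 → ℂ) i +
    delta14 v x y t * sigma14 v x y t i

lemma HG14_eq : HG14 = -1 := by
  simp [HG14, Matrix.det_fin_three]

/-- Caustic of the parabola `y² = 2xt` from the source at infinity
`S₀ = (1−v², 2v, 0)`, `v ≠ 0`: under the parametrization `ψ(a,b) = (a²/2, ab, b²)`,
the caustic map has the stated sextic parametrization. -/
theorem stmt14 (v a b : ℂ) (hv : v ≠ 0) :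
    Phi14 v (a ^ 2 / 2) (a * b) (b ^ 2) 0 =
      2 * v * (1 - v ^ 2) * a ^ 3 * b ^ 3 + 12 * v ^ 2 * a ^ 2 * b ^ 4 -
        6 * v * (1 - v ^ 2) * a * b ^ 5 + (1 - v ^ 2) ^ 2 * b ^ 6 ∧
    Phi14 v (a ^ 2 / 2) (a * b) (b ^ 2) 1 =
      -4 * v ^ 2 * a ^ 3 * b ^ 3 + 6 * v * (1 - v ^ 2) * a ^ 2 * b ^ 4 +
        12 * v ^ 2 * a * b ^ 5 - 2 * v * (1 - v ^ 2) * b ^ 6 ∧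
    Phi14 v (a ^ 2 / 2) (a * b) (b ^ 2) 2 = 2 * (1 + v ^ 2) ^ 2 * b ^ 6 := by
  refine ⟨?_, ?_, ?_⟩ <;>
    simp only [Phi14, sigma14, delta14, NS14, HG14_eq,
      Matrix.cons_val_zero, Matrix.cons_val_one, Matrix.head_cons, Matrix.cons_val_two,
      Matrix.tail_cons, Matrix.head_fin_const, Matrix.cons_val', Matrix.empty_val',
      Matrix.cons_val_fin_one] <;> ring
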